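/- arXiv:2008.13276 — 5 statements merged into one kernel-verified Lean document; each statement's English description precedes it below -/
import Mathlib

section
/- Let β > 0 and let S ⊆ N be a weakly (β,T)-cohesive group in a PB election such that there exists no pair (S',T') with S' ⊆ N weakly (β,T')-cohesive and cost(T') < cost(T). Then for every subset A ⊆ T, the set {i ∈ S : u_i(A) > 0} has size at least cost(A)·n. -/
open Finset

section PBDefs

variable {V C : Type*} [Fintype V] [DecidableEq V] [Fintype C] [DecidableEq C]

/-- Total cost (as a real number) of a set of candidates. -/
def costOf (cost : C → ℚ) (T : Finset C) : ℝ := ∑ c ∈ T, (cost c : ℝ)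

/-- Total (additive) utility of voter `i` for a set of candidates. -/
def util (u : V → C → ℝ) (i : V) (T : Finset C) : ℝ := ∑ c ∈ T, u i c

/-- A set of candidates is feasible if its total cost is within the budget of 1. -/
def feasible (cost : C → ℚ) (W : Finset C) : Prop := costOf cost W ≤ 1

/-- The validity conditions of a PB election: positive costs, utilities in `[0,1]`,
and every candidate is assigned positive utility by some voter. -/
def validPB (cost : C → ℚ) (u : V → C → ℝ) : Prop :=
  (∀ c, 0 < cost c) ∧ (∀ i c, 0 ≤ u i c ∧ u i c ≤ 1) ∧ (∀ c, ∃ i, 0 < u i c)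

/-- Extended justified representation, up to one project: for every (α,T)-cohesive
(nonempty) group `S` of voters, some voter `i ∈ S` gets utility at least `∑ c ∈ T, α c`,
or some voter `i ∈ S` would exceed this utility after adding one more candidate. -/
def EJRupToOne (cost : C → ℚ) (u : V → C → ℝ) (W : Finset C) : Prop :=
  ∀ (α : C → ℝ) (S : Finset V) (T : Finset C),
    (∀ c, 0 ≤ α c ∧ α c ≤ 1) →
    S.Nonempty →
    costOf cost T * (Fintype.card V : ℝ) ≤ (S.card : ℝ) →
    (∀ i ∈ S, ∀ c ∈ T, α c ≤ u i c) →
    (∃ i ∈ S, (∑ c ∈ T, α c) ≤ util u i W) ∨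
      (∃ i ∈ S, ∃ a : C, (∑ c ∈ T, α c) < util u i (insert a W))

/-- Extended justified representation (exact version): for every (α,T)-cohesive
(nonempty) group `S` of voters, some voter `i ∈ S` gets utility at least `∑ c ∈ T, α c`. -/
def EJRexact (cost : C → ℚ) (u : V → C → ℝ) (W : Finset C) : Prop :=
  ∀ (α : C → ℝ) (S : Finset V) (T : Finset C),
    (∀ c, 0 ≤ α c ∧ α c ≤ 1) →
    S.Nonempty →
    costOf cost T * (Fintype.card V : ℝ) ≤ (S.card : ℝ) →
    (∀ i ∈ S, ∀ c ∈ T, α c ≤ u i c) →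
    ∃ i ∈ S, (∑ c ∈ T, α c) ≤ util u i W

/-- A (nonempty) group `S` of voters is weakly (β,T)-cohesive. -/
def weaklyCohesive (cost : C → ℚ) (u : V → C → ℝ) (β : ℝ) (S : Finset V) (T : Finset C) :
    Prop :=
  S.Nonempty ∧ costOf cost T * (Fintype.card V : ℝ) ≤ (S.card : ℝ) ∧
    ∀ i ∈ S, β ≤ util u i T

/-- Full justified representation. -/
def FJR (cost : C → ℚ) (u : V → C → ℝ) (W : Finset C) : Prop :=
  ∀ (β : ℝ) (S : Finset V) (T : Finset C),
    weaklyCohesive cost u β S T → ∃ i ∈ S, β ≤ util u i W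

/-- An outcome is exhaustive if no further candidate fits within the budget. -/
def exhaustive (cost : C → ℚ) (W : Finset C) : Prop :=
  ∀ c ∉ W, 1 < costOf cost (insert c W)

/-- The core: no nonempty group `S` of voters together with a set `T` of candidates
affordable with `S`'s share of the budget can block the outcome. -/
def inCore (cost : C → ℚ) (u : V → C → ℝ) (W : Finset C) : Prop :=
  ∀ (S : Finset V) (T : Finset C), S.Nonempty →
    costOf cost T * (Fintype.card V : ℝ) ≤ (S.card : ℝ) →
    ∃ i ∈ S, util u i T ≤ util u i W

/-- The multiplicative `a`-approximate core. -/
def inAlphaCore (cost : C → ℚ) (u : V → C → ℝ) (a : ℝ) (W : Finset C) : Prop :=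
  ∀ (S : Finset V) (T : Finset C), T.Nonempty →
    costOf cost T ≤ (S.card : ℝ) / (Fintype.card V : ℝ) →
    ∃ i ∈ S, ∃ c ∈ T, util u i T / a ≤ util u i (insert c W)

/-- The total amount paid so far by voter `i`, given per-candidate payments. -/
def totalPaid (pay : V → C → ℝ) (i : V) : ℝ := ∑ c, pay i c

/-- A candidate `c` is ρ-affordable given the payments made so far. -/
def affordable (cost : C → ℚ) (u : V → C → ℝ) (pay : V → C → ℝ) (ρ : ℝ) (c : C) : Prop :=
  ∑ i, min (1 / (Fintype.card V : ℝ) - totalPaid pay i) (u i c * ρ) = (cost c : ℝ)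

/-- One step of Rule X: add a candidate that is ρ-affordable for the minimum ρ ≥ 0,
and record the corresponding payments. -/
def RuleXStep (cost : C → ℚ) (u : V → C → ℝ) :
    (Finset C × (V → C → ℝ)) → (Finset C × (V → C → ℝ)) → Prop := fun s t =>
  ∃ c ∉ s.1, ∃ ρ : ℝ, 0 ≤ ρ ∧ affordable cost u s.2 ρ c ∧
    (∀ ρ' : ℝ, 0 ≤ ρ' → ∀ c' ∉ s.1, affordable cost u s.2 ρ' c' → ρ ≤ ρ') ∧
    t = (insert c s.1,
      fun i c' => if c' = c then
        min (1 / (Fintype.card V : ℝ) - totalPaid s.2 i) (u i c * ρ) else s.2 i c')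

/-- Rule X terminates when no remaining candidate is ρ-affordable for any ρ ≥ 0. -/
def RuleXTerminal (cost : C → ℚ) (u : V → C → ℝ) (s : Finset C × (V → C → ℝ)) : Prop :=
  ∀ ρ : ℝ, 0 ≤ ρ → ∀ c ∉ s.1, ¬ affordable cost u s.2 ρ c

/-- `W` is the output of some execution of Rule X. -/
def RuleXOutcome (cost : C → ℚ) (u : V → C → ℝ) (W : Finset C) : Prop :=
  ∃ pay : V → C → ℝ,
    Relation.ReflTransGen (RuleXStep cost u) (∅, fun _ _ => 0) (W, pay) ∧
      RuleXTerminal cost u (W, pay)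

/-- One step of the Greedy Cohesive Rule: a state consists of the current outcome,
the active voters and the active candidates.  The rule picks a weakly (β,T)-cohesive
group of active voters with β maximal, breaking ties in favor of smaller `cost T`. -/
def GCRStep (cost : C → ℚ) (u : V → C → ℝ) :
    (Finset C × Finset V × Finset C) → (Finset C × Finset V × Finset C) → Prop := fun s t =>
  ∃ (β : ℝ) (S : Finset V) (T : Finset C),
    0 < β ∧ S ⊆ s.2.1 ∧ T ⊆ s.2.2 ∧ weaklyCohesive cost u β S T ∧
    (∀ (β' : ℝ) (S' : Finset V) (T' : Finset C), 0 < β' → S' ⊆ s.2.1 → T' ⊆ s.2.2 →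
      weaklyCohesive cost u β' S' T' → β' ≤ β) ∧
    (∀ (S' : Finset V) (T' : Finset C), S' ⊆ s.2.1 → T' ⊆ s.2.2 →
      weaklyCohesive cost u β S' T' → costOf cost T ≤ costOf cost T') ∧
    t = (s.1 ∪ T, s.2.1 \ S, s.2.2 \ T)

/-- GCR terminates when no weakly cohesive group of active voters remains. -/
def GCRTerminal (cost : C → ℚ) (u : V → C → ℝ) (s : Finset C × Finset V × Finset C) : Prop :=
  ∀ (β : ℝ) (S : Finset V) (T : Finset C), 0 < β → S ⊆ s.2.1 → T ⊆ s.2.2 →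
    ¬ weaklyCohesive cost u β S T

/-- `W` is the output of some execution of the Greedy Cohesive Rule. -/
def GCROutcome (cost : C → ℚ) (u : V → C → ℝ) (W : Finset C) : Prop :=
  ∃ (AV : Finset V) (AC : Finset C),
    Relation.ReflTransGen (GCRStep cost u) (∅, Finset.univ, Finset.univ) (W, AV, AC) ∧
      GCRTerminal cost u (W, AV, AC)

/-- A price system `(b, p)` (with nonnegative payments) supports the outcome `W`:
conditions (C1)-(C5). -/
def supports (cost : C → ℚ) (u : V → C → ℝ) (b : ℝ) (p : V → C → ℝ) (W : Finset C) : Prop :=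
  1 ≤ b ∧ (∀ i c, 0 ≤ p i c) ∧
  (∀ i c, u i c = 0 → p i c = 0) ∧
  (∀ i, ∑ c, p i c ≤ b / (Fintype.card V : ℝ)) ∧
  (∀ c ∈ W, ∑ i, p i c = (cost c : ℝ)) ∧
  (∀ c ∉ W, ∑ i, p i c = 0) ∧
  (∀ c ∉ W, ∑ i ∈ Finset.univ.filter (fun i => 0 < u i c),
    (b / (Fintype.card V : ℝ) - ∑ c' ∈ W, p i c') ≤ (cost c : ℝ))

/-- An outcome is priceable if some price system supports it. -/
def priceable (cost : C → ℚ) (u : V → C → ℝ) (W : Finset C) : Prop :=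
  ∃ (b : ℝ) (p : V → C → ℝ), supports cost u b p W

/-- EJR for approval-based elections: every `T`-cohesive group contains a voter
with at least `|T|` approved candidates in `W`. -/
def approvalEJR (cost : C → ℚ) (A : V → Finset C) (W : Finset C) : Prop :=
  ∀ (S : Finset V) (T : Finset C), S.Nonempty →
    costOf cost T * (Fintype.card V : ℝ) ≤ (S.card : ℝ) →
    (∀ i ∈ S, T ⊆ A i) →
    ∃ i ∈ S, T.card ≤ (A i ∩ W).card

/-- The `t`-th harmonic number. -/
noncomputable def harm (t : ℕ) : ℝ := ∑ j ∈ Finset.range t, (1 : ℝ) / (j + 1)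

/-- The PAV score of an outcome. -/
noncomputable def PAVscore (A : V → Finset C) (W : Finset C) : ℝ := ∑ i, harm ((A i ∩ W).card)

end PBDefs

/-!
If fewer than `cost(A)·n` voters of `S` derive positive utility from `A ⊆ T`, then the remaining
voters of `S` get nothing from `A`, so they still have utility `β` from `T \ A`, and there are
more than `cost(T \ A)·n` of them. They form a weakly `(β, T \ A)`-cohesive group, and
`cost(T \ A) < cost(T)` because `cost(A)·n` exceeds a cardinality and hence is positive.
-/

section CohesiveSupport

variable {V C : Type*}

theorem costOf_nonneg {cost : C → ℚ} (hcost : ∀ c, 0 ≤ cost c) (T : Finset C) :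
    0 ≤ costOf cost T :=
  Finset.sum_nonneg fun c _ => by exact_mod_cast hcost c

theorem costOf_sdiff [DecidableEq C] (cost : C → ℚ) {A T : Finset C} (hA : A ⊆ T) :
    costOf cost (T \ A) = costOf cost T - costOf cost A :=
  Finset.sum_sdiff_eq_sub hA

theorem util_sdiff [DecidableEq C] (u : V → C → ℝ) (i : V) {A T : Finset C} (hA : A ⊆ T) :
    util u i (T \ A) = util u i T - util u i A :=
  Finset.sum_sdiff_eq_sub hA

theorem util_nonneg {u : V → C → ℝ} (hu : ∀ i c, 0 ≤ u i c) (i : V) (T : Finset C) :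
    0 ≤ util u i T :=
  Finset.sum_nonneg fun c _ => hu i c

theorem weaklyCohesive_sdiff_of_card_support_lt [Fintype V] [DecidableEq V] [Fintype C]
    [DecidableEq C] {cost : C → ℚ} {u : V → C → ℝ}
    (hcost : ∀ c, 0 ≤ cost c) (hu : ∀ i c, 0 ≤ u i c) {β : ℝ} {S : Finset V}
    {A T : Finset C} (hcoh : weaklyCohesive cost u β S T) (hA : A ⊆ T)
    (hsupport : ((S.filter (fun i => 0 < util u i A)).card : ℝ) <
      costOf cost A * (Fintype.card V : ℝ)) :
    weaklyCohesive cost u β (S.filter (fun i => ¬ 0 < util u i A)) (T \ A) := by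
  obtain ⟨-, hScard, hSutil⟩ := hcoh
  have hsplit := S.card_filter_add_card_filter_not (fun i => 0 < util u i A)
  have hcard : costOf cost (T \ A) * (Fintype.card V : ℝ) <
      ((S.filter (fun i => ¬ 0 < util u i A)).card : ℝ) := by
    rw [costOf_sdiff cost hA]
    have : (S.card : ℝ) = _ := congrArg (Nat.cast (R := ℝ)) hsplit.symm
    push_cast at this
    linarith
  refine ⟨?_, hcard.le, fun i hi => ?_⟩
  · rw [← Finset.card_pos, ← Nat.cast_pos (α := ℝ)]
    exact (mul_nonneg (costOf_nonneg hcost _) (Nat.cast_nonneg _)).trans_lt hcard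
  · obtain ⟨hiS, hiA⟩ := Finset.mem_filter.mp hi
    have hzero : util u i A = 0 := le_antisymm (not_lt.mp hiA) (util_nonneg hu i A)
    rw [util_sdiff u i hA, hzero, sub_zero]
    exact hSutil i hiS

end CohesiveSupport

theorem cohesive_support_lemma_general
    {V C : Type*} [Fintype V] [DecidableEq V] [Fintype C] [DecidableEq C]
    (cost : C → ℚ) (u : V → C → ℝ) (hvalid : validPB cost u)
    (β : ℝ) (S : Finset V) (T : Finset C)
    (hcoh : weaklyCohesive cost u β S T)
    (hmin : ¬ ∃ (S' : Finset V) (T' : Finset C),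
      weaklyCohesive cost u β S' T' ∧ costOf cost T' < costOf cost T) :
    ∀ A ⊆ T, costOf cost A * (Fintype.card V : ℝ) ≤
      ((S.filter (fun i => 0 < util u i A)).card : ℝ) := by
  intro A hA
  by_contra! hsupport
  obtain ⟨hpos, hu, -⟩ := hvalid
  have hcost : ∀ c, 0 ≤ cost c := fun c => (hpos c).le
  have hAcost : 0 < costOf cost A :=
    pos_of_mul_pos_left ((Nat.cast_nonneg _).trans_lt hsupport) (Nat.cast_nonneg _)
  refine hmin ⟨_, T \ A, weaklyCohesive_sdiff_of_card_support_lt hcost (fun i c => (hu i c).1)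
    hcoh hA hsupport, ?_⟩
  rw [costOf_sdiff cost hA]
  linarith

/-- If `S` is weakly (β,T)-cohesive with β > 0 and no weakly
(β,T')-cohesive pair has strictly smaller cost than `T`, then for every `A ⊆ T`
at least `cost(A)·n` voters of `S` assign positive utility to `A`. -/
theorem cohesive_support_lemma
    {V C : Type*} [Fintype V] [DecidableEq V] [Fintype C] [DecidableEq C]
    (cost : C → ℚ) (u : V → C → ℝ) (hvalid : validPB cost u)
    (β : ℝ) (hβ : 0 < β) (S : Finset V) (T : Finset C)
    (hcoh : weaklyCohesive cost u β S T)
    (hmin : ¬ ∃ (S' : Finset V) (T' : Finset C),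
      weaklyCohesive cost u β S' T' ∧ costOf cost T' < costOf cost T) :
    ∀ A ⊆ T, costOf cost A * (Fintype.card V : ℝ) ≤
      ((S.filter (fun i => 0 < util u i A)).card : ℝ) :=
  cohesive_support_lemma_general cost u hvalid β S T hcoh hmin
end

section
/- Let S ⊆ N and T ⊆ C in a PB election with rational costs, and suppose that for every subset A ⊆ T the set {i ∈ S : u_i(A) > 0} has size at least cost(A)·n. Then there exist payments p_i : T → ℝ≥0 for the voters i ∈ S such that: (i) p_i(c) = 0 whenever u_i(c) = 0; (ii) Σ_{i∈S} p_i(c) = cost(c) for every c ∈ T; and (iii) Σ_{c∈T} p_i(c) ≤ 1/n for every i ∈ S. -/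
open Finset

/-!
Clearing denominators turns the payment problem into a matching problem. Let `D` be a common
denominator of the costs. Split each `c ∈ T` into `cost c · n · D` unit demands and give each
voter `D` unit slots; a demand of `c` may use a slot of a voter of `S` with positive utility
for `c`. The hypothesis, multiplied by `D`, is exactly Hall's condition for this bipartite
graph, so all demands can be matched injectively, and paying `1 / (n D)` per matched slot
gives the payments.
-/

section Allocation

variable {V C : Type*}

theorem exists_nat_allocation_of_hall [DecidableEq V] [DecidableEq C] (N : C → Finset V)
    (k : C → ℕ) (D : ℕ) (hall : ∀ A : Finset C, ∑ c ∈ A, k c ≤ D * #(A.biUnion N)) :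
    ∃ q : V → C → ℕ, (∀ c, ∀ i ∉ N c, q i c = 0) ∧ (∀ c, ∑ i ∈ N c, q i c = k c) ∧
      ∀ i (A : Finset C), ∑ c ∈ A, q i c ≤ D := by
  set slots : (Σ c, Fin (k c)) → Finset (V × Fin D) := fun x => N x.1 ×ˢ univ
  have hslots : ∀ s : Finset (Σ c, Fin (k c)), #s ≤ #(s.biUnion slots) := by
    intro s
    calc #s ≤ #((s.image Sigma.fst).sigma fun c => (univ : Finset (Fin (k c)))) :=
          card_le_card fun x hx => mem_sigma.2 ⟨mem_image_of_mem _ hx, mem_univ _⟩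
      _ ≤ D * #((s.image Sigma.fst).biUnion N) := by simpa using hall (s.image Sigma.fst)
      _ = #((s.image Sigma.fst).biUnion N ×ˢ (univ : Finset (Fin D))) := by
          rw [card_product, card_univ, Fintype.card_fin, mul_comm]
      _ = #(s.biUnion slots) := by
          rw [image_biUnion]
          congr 1
          ext
          simp [slots]
  obtain ⟨f, hf, hfslot⟩ := (all_card_le_biUnion_card_iff_exists_injective slots).1 hslots
  have hfN : ∀ x, (f x).1 ∈ N x.1 := fun x => (mem_product.1 (hfslot x)).1
  refine ⟨fun i c => #{j : Fin (k c) | (f ⟨c, j⟩).1 = i}, ?_, fun c => ?_, fun i A => ?_⟩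
  · intro c i hi
    rw [card_eq_zero, filter_eq_empty_iff]
    rintro j - rfl
    exact hi (hfN _)
  · rw [← card_eq_sum_card_fiberwise fun j _ => hfN ⟨c, j⟩, card_univ, Fintype.card_fin]
  · rw [← card_sigma]
    calc _ ≤ #(univ : Finset (Fin D)) := by
          refine card_le_card_of_injOn (fun x => (f x).2) (fun _ _ => mem_coe.2 (mem_univ _)) ?_
          intro x hx y hy hxy
          obtain ⟨-, hxi⟩ : x.1 ∈ A ∧ (f x).1 = i := by simpa using hx
          obtain ⟨-, hyi⟩ : y.1 ∈ A ∧ (f y).1 = i := by simpa using hy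
          exact hf (Prod.ext (hxi.trans hyi.symm) hxy)
      _ = D := card_fin D

theorem exists_common_denominator (T : Finset C) (d : C → ℚ) (hd : ∀ c ∈ T, 0 ≤ d c) :
    ∃ D : ℕ, 0 < D ∧ ∀ c ∈ T, ∃ m : ℕ, (m : ℚ) = d c * D := by
  refine ⟨∏ c ∈ T, (d c).den, prod_pos fun c _ => (d c).pos, fun c hc => ?_⟩
  obtain ⟨e, he⟩ := dvd_prod_of_mem (fun c => (d c).den) hc
  refine ⟨(d c).num.toNat * e, ?_⟩
  rw [he]
  have hnum : (((d c).num.toNat : ℤ) : ℚ) = (d c).num := by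
    rw [Int.toNat_of_nonneg (Rat.num_nonneg.2 (hd c hc))]
  push_cast at hnum ⊢
  rw [hnum, ← mul_assoc, Rat.mul_den_eq_num]

theorem filter_sum_pos_subset_biUnion [DecidableEq V] (S : Finset V) (A : Finset C)
    (f : V → C → ℝ) :
    {i ∈ S | 0 < ∑ c ∈ A, f i c} ⊆ A.biUnion fun c => {i ∈ S | 0 < f i c} := by
  intro i hi
  obtain ⟨hiS, hpos⟩ := mem_filter.1 hi
  obtain ⟨c, hcA, hc⟩ := exists_lt_of_sum_lt (f := fun _ => (0 : ℝ)) (by simpa using hpos)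
  exact mem_biUnion.2 ⟨c, hcA, mem_filter.2 ⟨hiS, by simpa using hc⟩⟩

theorem exists_rat_allocation_of_hall [DecidableEq V] [DecidableEq C] (T : Finset C)
    (N : C → Finset V) (d : C → ℚ) (hd : ∀ c ∈ T, 0 ≤ d c)
    (hall : ∀ A ⊆ T, ∑ c ∈ A, (d c : ℝ) ≤ #(A.biUnion N)) :
    ∃ p : V → C → ℝ, (∀ i c, 0 ≤ p i c) ∧ (∀ c, ∀ i ∉ N c, p i c = 0) ∧
      (∀ c ∈ T, ∑ i ∈ N c, p i c = d c) ∧ ∀ i, ∑ c ∈ T, p i c ≤ 1 := by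
  obtain ⟨D, hD, hdD⟩ := exists_common_denominator T d hd
  choose! m hm using hdD
  have hDR : (0 : ℝ) < D := Nat.cast_pos.2 hD
  have hmR : ∀ c ∈ T, (m c : ℝ) = d c * D := fun c hc => by exact_mod_cast hm c hc
  obtain ⟨q, hqN, hqsum, hqcap⟩ :=
    exists_nat_allocation_of_hall N (fun c => if c ∈ T then m c else 0) D fun A => by
      rw [sum_ite_mem]
      calc ∑ c ∈ A ∩ T, m c ≤ D * #((A ∩ T).biUnion N) := by
            rw [← Nat.cast_le (α := ℝ)]
            push_cast
            rw [sum_congr rfl fun c hc => hmR c (mem_inter.1 hc).2, ← sum_mul, mul_comm]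
            gcongr
            exact hall _ inter_subset_right
        _ ≤ D * #(A.biUnion N) := by gcongr; exact inter_subset_left
  refine ⟨fun i c => q i c / D, fun i c => by positivity, fun c i hi => by simp [hqN c i hi],
    fun c hc => ?_, fun i => ?_⟩
  · rw [← sum_div, ← Nat.cast_sum, hqsum, if_pos hc, hmR c hc, mul_div_cancel_right₀ _ hDR.ne']
  · rw [← sum_div, div_le_one hDR, ← Nat.cast_sum]
    exact_mod_cast hqcap i T

end Allocation

/-- If for every subset `A ⊆ T` at least `cost(A)·n` voters of `S`
assign positive utility to `A`, then there exist nonnegative payments of the voters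
in `S` for the candidates in `T` such that voters only pay for candidates they value
positively, every candidate in `T` is fully paid, and no voter of `S` pays more
than `1/n` in total. -/
theorem cohesive_payment_lemma
    {V C : Type*} [Fintype V] [DecidableEq V] [Fintype C] [DecidableEq C] [Nonempty V]
    (cost : C → ℚ) (u : V → C → ℝ) (hvalid : validPB cost u)
    (S : Finset V) (T : Finset C)
    (hhall : ∀ A ⊆ T, costOf cost A * (Fintype.card V : ℝ) ≤
      ((S.filter (fun i => 0 < util u i A)).card : ℝ)) :
    ∃ p : V → C → ℝ,
      (∀ i c, 0 ≤ p i c) ∧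
      (∀ i ∈ S, ∀ c ∈ T, u i c = 0 → p i c = 0) ∧
      (∀ c ∈ T, ∑ i ∈ S, p i c = (cost c : ℝ)) ∧
      (∀ i ∈ S, ∑ c ∈ T, p i c ≤ 1 / (Fintype.card V : ℝ)) := by
  set n := Fintype.card V
  have hn : (0 : ℝ) < n := Nat.cast_pos.2 Fintype.card_pos
  set N : C → Finset V := fun c => {i ∈ S | 0 < u i c}
  obtain ⟨p, hp0, hpN, hpsum, hpcap⟩ := exists_rat_allocation_of_hall T N (fun c => cost c * n)
    (fun c _ => mul_nonneg (hvalid.1 c).le n.cast_nonneg) fun A hA => by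
      calc ∑ c ∈ A, ((cost c * n : ℚ) : ℝ) = costOf cost A * n := by
            push_cast; rw [costOf, sum_mul]
        _ ≤ #{i ∈ S | 0 < util u i A} := hhall A hA
        _ ≤ #(A.biUnion N) := by gcongr; exact filter_sum_pos_subset_biUnion S A u
  refine ⟨fun i c => p i c / n, fun i c => div_nonneg (hp0 i c) hn.le,
    fun i _ c _ hu => by simp [hpN c i (by simp [N, hu])], fun c hc => ?_,
    fun i _ => by rw [← sum_div]; gcongr; exact hpcap i⟩
  have hNS : N c ⊆ S := filter_subset _ S
  rw [← sum_div, ← sum_subset hNS fun i _ hi => hpN c i hi, hpsum c hc]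
  push_cast
  field_simp
end

section
/- For every outcome W produced by an execution of the Greedy Cohesive Rule, there exist payment functions p_i : C → ℝ≥0 (i ∈ N) satisfying conditions (C1)–(C4) of a price system for W with initial budget b = 1: p_i(c) = 0 whenever u_i(c) = 0; Σ_{c∈C} p_i(c) ≤ 1/n for each i ∈ N; Σ_{i∈N} p_i(c) = cost(c) for each c ∈ W; and Σ_{i∈N} p_i(c) = 0 for each c ∉ W. -/
open Finset

/-!
At every step GCR picks `(β, S, T)` with `cost T` minimal among the weakly `β`-cohesive pairs.
Hence for every `T' ⊆ T` at least `n · cost T'` voters of `S` like some candidate of `T'`: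
otherwise the other voters of `S` together with `T \ T'` would be a cheaper weakly
`β`-cohesive pair. This is Hall's condition for the voters of `S` to pay for `T` out of their
budgets `1/n`, each paying only for candidates they like; after scaling the rational costs to
integers it follows from Hall's marriage theorem. The voters of `S` are then deactivated, so
the payments of the successive steps add up to a price system for the outcome.
-/

theorem Finset.exists_nat_assignment_of_hall {ι α : Type*} [Fintype ι] [Fintype α]
    [DecidableEq α] (N : ι → Finset α) (a : ι → ℕ) (d : ℕ)
    (hall : ∀ s : Finset ι, ∑ c ∈ s, a c ≤ d * #(s.biUnion N)) :
    ∃ m : α → ι → ℕ, (∀ i c, i ∉ N c → m i c = 0) ∧ (∀ c, ∑ i, m i c = a c) ∧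
      ∀ i, ∑ c, m i c ≤ d := by
  classical
  -- Hall's theorem for the `a c` copies of each `c`, matched to the `d` copies of each voter.
  obtain ⟨f, hf_inj, hf_mem⟩ := (all_card_le_biUnion_card_iff_exists_injective
    fun x : Σ c, Fin (a c) => N x.1 ×ˢ (univ : Finset (Fin d))).mp fun s => by
      have hunion : s.biUnion (fun x => N x.1 ×ˢ (univ : Finset (Fin d))) =
          (s.image Sigma.fst).biUnion N ×ˢ univ := by
        ext ⟨i, k⟩; simp
      calc #s ≤ #((s.image Sigma.fst).sigma fun c => (univ : Finset (Fin (a c)))) :=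
            card_le_card fun x hx => mem_sigma.mpr ⟨mem_image_of_mem _ hx, mem_univ _⟩
        _ = ∑ c ∈ s.image Sigma.fst, a c := by simp [card_sigma]
        _ ≤ d * #((s.image Sigma.fst).biUnion N) := hall _
        _ = #(s.biUnion fun x => N x.1 ×ˢ (univ : Finset (Fin d))) := by
            rw [hunion, card_product, card_univ, Fintype.card_fin, mul_comm]
  refine ⟨fun i c => #{k : Fin (a c) | (f ⟨c, k⟩).1 = i}, fun i c hi => ?_, fun c => ?_,
    fun i => ?_⟩
  · refine card_eq_zero.mpr (filter_eq_empty_iff.mpr fun k _ hk => hi ?_)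
    exact hk ▸ (mem_product.mp (hf_mem ⟨c, k⟩)).1
  · simpa using (card_eq_sum_card_fiberwise (s := univ) (t := univ)
      (f := fun k : Fin (a c) => (f ⟨c, k⟩).1) fun _ _ => mem_univ _).symm
  · calc ∑ c, #{k : Fin (a c) | (f ⟨c, k⟩).1 = i}
          = #(univ.sigma fun c => ({k : Fin (a c) | (f ⟨c, k⟩).1 = i} : Finset _)) :=
            (card_sigma _ _).symm
        _ ≤ #(univ : Finset (Fin d)) := by
            refine card_le_card_of_injOn (fun x => (f x).2) (fun _ _ => mem_univ _) ?_
            intro x hx y hy hxy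
            simp only [coe_sigma, Set.mem_sigma_iff, coe_filter, Set.mem_ofPred_eq] at hx hy
            exact hf_inj (Prod.ext (hx.2.2.trans hy.2.2.symm) hxy)
        _ = d := by simp

theorem exists_pos_nat_mul_eq_natCast {ι : Type*} [Fintype ι] (q : ι → ℚ) (hq : ∀ c, 0 ≤ q c) :
    ∃ D : ℕ, 0 < D ∧ ∃ a : ι → ℕ, ∀ c, (a c : ℚ) = q c * D := by
  have hnat (c : ι) : ∃ m : ℕ, (m : ℚ) = q c * ∏ c, (q c).den := by
    obtain ⟨k, hk⟩ := dvd_prod_of_mem (fun c => (q c).den) (mem_univ c)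
    refine ⟨(q c).num.toNat * k, ?_⟩
    rw [hk, Nat.cast_mul, Nat.cast_mul, ← mul_assoc, Rat.mul_den_eq_num]
    exact_mod_cast congrArg (· * (k : ℤ)) (Int.toNat_of_nonneg (Rat.num_nonneg.mpr (hq c)))
  exact ⟨_, prod_pos fun c _ => (q c).pos, Classical.skolem.mp hnat⟩

theorem exists_fractional_assignment_of_hall {V C : Type*} [Fintype V] [DecidableEq V]
    [Fintype C] (w : C → ℚ) (hw : ∀ c, 0 ≤ w c) (N : C → Finset V)
    (T : Finset C) {n : ℕ} (hn : 0 < n)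
    (hall : ∀ T' ⊆ T, costOf w T' * n ≤ #(T'.biUnion N)) :
    ∃ q : V → C → ℝ, (∀ i c, 0 ≤ q i c) ∧ (∀ i c, i ∉ N c → q i c = 0) ∧
      (∀ i, ∑ c, q i c ≤ 1 / n) ∧ (∀ c ∈ T, ∑ i, q i c = w c) ∧
      (∀ c ∉ T, ∑ i, q i c = 0) := by
  classical
  obtain ⟨D, hD, a, ha⟩ := exists_pos_nat_mul_eq_natCast w hw
  have haR : ∀ c, (a c : ℝ) = w c * D := fun c => by exact_mod_cast ha c
  obtain ⟨m, hmN, hmcol, hmrow⟩ :=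
    exists_nat_assignment_of_hall N (fun c => if c ∈ T then a c * n else 0) D fun s => by
      have hsT : ((∑ c ∈ s with c ∈ T, a c * n : ℕ) : ℝ) ≤
          D * #({c ∈ s | c ∈ T}.biUnion N) := by
        have := hall {c ∈ s | c ∈ T} fun c hc => (mem_filter.mp hc).2
        push_cast [haR, costOf, ← sum_mul] at this ⊢
        linarith [mul_le_mul_of_nonneg_left this (Nat.cast_nonneg (α := ℝ) D)]
      calc ∑ c ∈ s, (if c ∈ T then a c * n else 0) = ∑ c ∈ s with c ∈ T, a c * n :=
            (sum_filter _ _).symm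
        _ ≤ D * #({c ∈ s | c ∈ T}.biUnion N) := by exact_mod_cast hsT
        _ ≤ D * #(s.biUnion N) := by gcongr; exact filter_subset _ _
  have hnD : (0 : ℝ) < n * D := by positivity
  refine ⟨fun i c => m i c / (n * D), fun i c => by positivity,
    fun i c hi => by simp [hmN i c hi], fun i => ?_, fun c hc => ?_, fun c hc => ?_⟩
  · rw [← sum_div, div_le_div_iff₀ hnD (by positivity), one_mul, mul_comm]
    exact mul_le_mul_of_nonneg_left (by exact_mod_cast hmrow i) (Nat.cast_nonneg n)
  · rw [← sum_div, ← Nat.cast_sum, hmcol c]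
    simp only [hc, ↓reduceIte, Nat.cast_mul, haR]
    field_simp
  · rw [← sum_div, ← Nat.cast_sum, hmcol c]
    simp [hc]

section GreedyCohesive

variable {V C : Type*} [Fintype V] {cost : C → ℚ} {u : V → C → ℝ}

/-- Conditions (C1)–(C4) of a price system with budget `1`, with nonnegative payments. -/
def IsPartialPriceSystem [Fintype C] (cost : C → ℚ) (u : V → C → ℝ) (p : V → C → ℝ)
    (W : Finset C) : Prop :=
  (∀ i c, 0 ≤ p i c) ∧
    (∀ i c, u i c = 0 → p i c = 0) ∧
    (∀ i, ∑ c, p i c ≤ 1 / (Fintype.card V : ℝ)) ∧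
    (∀ c ∈ W, ∑ i, p i c = (cost c : ℝ)) ∧
    (∀ c ∉ W, ∑ i, p i c = 0)

theorem isPartialPriceSystem_zero [Fintype C] : IsPartialPriceSystem cost u 0 ∅ :=
  ⟨fun _ _ => le_rfl, fun _ _ _ => rfl, fun _ => by simp, fun _ h => absurd h (notMem_empty _),
    fun _ _ => by simp⟩

theorem IsPartialPriceSystem.add [Fintype C] [DecidableEq C] {p q : V → C → ℝ} {W T : Finset C}
    (hp : IsPartialPriceSystem cost u p W) (hq : IsPartialPriceSystem cost u q T)
    (hWT : Disjoint W T) (hpayers : ∀ i, (∀ c, p i c = 0) ∨ ∀ c, q i c = 0) :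
    IsPartialPriceSystem cost u (p + q) (W ∪ T) := by
  obtain ⟨hp0, hpu, hprow, hpW, hpnW⟩ := hp
  obtain ⟨hq0, hqu, hqrow, hqT, hqnT⟩ := hq
  refine ⟨fun i c => add_nonneg (hp0 i c) (hq0 i c),
    fun i c hu => by simp [hpu i c hu, hqu i c hu], fun i => ?_, fun c hc => ?_, fun c hc => ?_⟩
  · rcases hpayers i with hpi | hqi
    · simpa [sum_add_distrib, hpi] using hqrow i
    · simpa [sum_add_distrib, hqi] using hprow i
  · simp only [Pi.add_apply, sum_add_distrib]
    rcases mem_union.mp hc with hcW | hcT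
    · rw [hpW c hcW, hqnT c (disjoint_left.mp hWT hcW), add_zero]
    · rw [hpnW c (disjoint_right.mp hWT hcT), hqT c hcT, zero_add]
  · rw [mem_union, not_or] at hc
    simp only [Pi.add_apply, sum_add_distrib, hpnW c hc.1, hqnT c hc.2, add_zero]

theorem weaklyCohesive.hall_of_min_cost [DecidableEq V] [DecidableEq C]
    (hcost : ∀ c, 0 ≤ cost c) {β : ℝ} {S : Finset V} {T : Finset C}
    (hcoh : weaklyCohesive cost u β S T)
    (hmin : ∀ S' ⊆ S, ∀ T' ⊆ T, weaklyCohesive cost u β S' T' →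
      costOf cost T ≤ costOf cost T') :
    ∀ T' ⊆ T, costOf cost T' * Fintype.card V ≤
      #(T'.biUnion fun c => {i ∈ S | 0 < u i c}) := by
  intro T' hT'
  by_contra! hlt
  set S₁ := T'.biUnion fun c => {i ∈ S | 0 < u i c}
  have hS₁ : S₁ ⊆ S := biUnion_subset.mpr fun _ _ => filter_subset _ _
  have hsplit : costOf cost (T \ T') + costOf cost T' = costOf cost T := sum_sdiff hT'
  have hcost_nonneg (T'' : Finset C) : 0 ≤ costOf cost T'' :=
    sum_nonneg fun c _ => Rat.cast_nonneg.mpr (hcost c)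
  have hcard : costOf cost (T \ T') * Fintype.card V < #(S \ S₁) := by
    rw [card_sdiff_of_subset hS₁, Nat.cast_sub (card_le_card hS₁)]
    nlinarith [hcoh.2.1]
  have hcoh' : weaklyCohesive cost u β (S \ S₁) (T \ T') := by
    refine ⟨card_pos.mp (by exact_mod_cast (mul_nonneg (hcost_nonneg _)
      (Nat.cast_nonneg _)).trans_lt hcard), hcard.le, fun i hi => ?_⟩
    obtain ⟨hiS, hiS₁⟩ := mem_sdiff.mp hi
    have hT'_zero : util u i T' ≤ 0 := sum_nonpos fun c hc => not_lt.mp fun hpos =>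
      hiS₁ (mem_biUnion.mpr ⟨c, hc, mem_filter.mpr ⟨hiS, hpos⟩⟩)
    have hutil : util u i (T \ T') + util u i T' = util u i T := sum_sdiff hT'
    linarith [hcoh.2.2 i hiS]
  have := hmin _ sdiff_subset _ sdiff_subset hcoh'
  nlinarith [hcost_nonneg T', (Nat.cast_nonneg #S₁ : (0 : ℝ) ≤ _)]

theorem exists_payments_of_min_cost [Fintype C] [DecidableEq V] [DecidableEq C]
    (hcost : ∀ c, 0 ≤ cost c) {β : ℝ} {S : Finset V} {T : Finset C}
    (hcoh : weaklyCohesive cost u β S T)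
    (hmin : ∀ S' ⊆ S, ∀ T' ⊆ T, weaklyCohesive cost u β S' T' →
      costOf cost T ≤ costOf cost T') :
    ∃ q, IsPartialPriceSystem cost u q T ∧ ∀ i ∉ S, ∀ c, q i c = 0 := by
  obtain ⟨q, hq0, hqN, hqrow, hqT, hqnT⟩ := exists_fractional_assignment_of_hall cost hcost
    (fun c => {i ∈ S | 0 < u i c}) T (hcoh.1.card_pos.trans_le (card_le_univ S))
    (hcoh.hall_of_min_cost hcost hmin)
  refine ⟨q, ⟨hq0, fun i c hu => hqN i c ?_, hqrow, hqT, hqnT⟩, fun i hi c => hqN i c ?_⟩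
  · simp [hu]
  · simp [hi]

theorem isPartialPriceSystem_of_reflTransGen_GCRStep [Fintype C] [DecidableEq V]
    [DecidableEq C] (hcost : ∀ c, 0 ≤ cost c) {s : Finset C × Finset V × Finset C}
    (hrun : Relation.ReflTransGen (GCRStep cost u) (∅, univ, univ) s) :
    Disjoint s.1 s.2.2 ∧
      ∃ p, IsPartialPriceSystem cost u p s.1 ∧ ∀ i ∈ s.2.1, ∀ c, p i c = 0 := by
  induction hrun with
  | refl => exact ⟨disjoint_empty_left _, 0, isPartialPriceSystem_zero, fun _ _ _ => rfl⟩
  | tail _ hstep ih =>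
    obtain ⟨hdisj, p, hp, hp_active⟩ := ih
    obtain ⟨β, S, T, -, hS, hT, hcoh, -, hmin, rfl⟩ := hstep
    obtain ⟨q, hq, hq_S⟩ := exists_payments_of_min_cost hcost hcoh
      fun S' hS' T' hT' => hmin S' T' (hS'.trans hS) (hT'.trans hT)
    refine ⟨disjoint_union_left.mpr ⟨hdisj.mono_right sdiff_subset, disjoint_sdiff⟩, p + q,
      hp.add hq (hdisj.mono_right hT) fun i => ?_, fun i hi c => ?_⟩
    · by_cases hi : i ∈ S
      · exact .inl (hp_active i (hS hi))
      · exact .inr (hq_S i hi)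
    · obtain ⟨hi_active, hi_S⟩ := mem_sdiff.mp hi
      simp [hp_active i hi_active c, hq_S i hi_S c]

end GreedyCohesive

/-- For every outcome of the Greedy Cohesive Rule there exist
nonnegative payment functions satisfying conditions (C1)-(C4) of a price system
with initial budget b = 1. -/
theorem GCR_partial_price_system
    {V C : Type*} [Fintype V] [DecidableEq V] [Fintype C] [DecidableEq C]
    (cost : C → ℚ) (u : V → C → ℝ) (hvalid : validPB cost u)
    (W : Finset C) (hW : GCROutcome cost u W) :
    ∃ p : V → C → ℝ,
      (∀ i c, 0 ≤ p i c) ∧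
      (∀ i c, u i c = 0 → p i c = 0) ∧
      (∀ i, ∑ c, p i c ≤ 1 / (Fintype.card V : ℝ)) ∧
      (∀ c ∈ W, ∑ i, p i c = (cost c : ℝ)) ∧
      (∀ c ∉ W, ∑ i, p i c = 0) := by
  obtain ⟨AV, AC, hrun, -⟩ := hW
  obtain ⟨-, p, hp, -⟩ :=
    isPartialPriceSystem_of_reflTransGen_GCRStep (fun c => (hvalid.1 c).le) hrun
  exact ⟨p, hp⟩
end

section
/- Rule X fails full justified representation: in the approval-based committee election with n = 22 voters, m = 13 candidates c_1,…,c_13 each of cost 1/11 (committee size k = 11), and approval sets A(1)=A(2)=A(3)={c_1,c_2,c_3,c_4,c_8}, A(4)=A(5)=A(6)={c_1,c_2,c_3,c_4,c_9}, A(7)=A(8)=A(9)={c_1,c_2,c_3,c_4,c_10}, A(10)=A(11)=A(12)={c_1,c_2,c_3,c_4,c_11}, A(13)=A(14)=A(15)={c_1,c_2,c_3,c_4,c_12}, A(16)=A(17)=A(18)={c_5,c_6,c_7,c_8,c_9,c_10,c_11,c_12}, A(19)=A(20)=A(21)={c_5,c_6,c_7}, A(22)={c_13}, there is an execution of Rule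 X that outputs W = {c_1,c_2,c_3,c_4,c_5,c_6,c_7}, and W violates FJR: the group S of voters 1–18 is weakly (5, {c_1,c_2,c_3,c_4,c_8,c_9,c_10,c_11,c_12})-cohesive, yet every voter in S has u_i(W) ≤ 4. -/
open Finset

/-- Approval sets of the 22 voters over the 13 candidates (candidate `c_j` is `j-1`). -/
def fjrApprovals : Fin 22 → Finset (Fin 13) := fun i =>
  if (i : ℕ) < 3 then {0, 1, 2, 3, 7}
  else if (i : ℕ) < 6 then {0, 1, 2, 3, 8}
  else if (i : ℕ) < 9 then {0, 1, 2, 3, 9}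
  else if (i : ℕ) < 12 then {0, 1, 2, 3, 10}
  else if (i : ℕ) < 15 then {0, 1, 2, 3, 11}
  else if (i : ℕ) < 18 then {4, 5, 6, 7, 8, 9, 10, 11}
  else if (i : ℕ) < 21 then {4, 5, 6}
  else {12}

/-- The corresponding 0/1 utility functions. -/
noncomputable def fjrUtil : Fin 22 → Fin 13 → ℝ := fun i c => if c ∈ fjrApprovals i then 1 else 0

/-- All 13 candidates cost 1/11 (committee size k = 11). -/
def fjrCost : Fin 13 → ℚ := fun _ => 1/11

/-!
Rule X is run here in a regime where no voter's budget ever binds, so it simply buys the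
candidates in increasing order of cost per approver: first `c₁,…,c₄` (15 approvers each,
price `1/165`), then `c₅,c₆,c₇` (6 approvers each, price `1/66`; the tie with `c₈,…,c₁₂` is
broken in their favour). Afterwards voters 16–21 have spent their whole budget `1/22`, voters
1–15 keep `7/330` and voter 22 keeps `1/22`, so the approvers of any remaining candidate hold
less than its cost `1/11`. Meanwhile voters 1–18 form a group of size `18 = 22 · 9/11`, each
approving 5 of the 9 candidates in `T`, yet none approves more than 4 members of the outcome.
-/

section RuleX

variable {V C : Type*} {cost : C → ℚ} {u : V → C → ℝ}

def pricedPayments [DecidableEq C] (u : V → C → ℝ) (ρ : C → ℝ) (W : Finset C) :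
    V → C → ℝ :=
  fun i c => if c ∈ W then u i c * ρ c else 0

lemma totalPaid_pricedPayments [Fintype C] [DecidableEq C] (ρ : C → ℝ) (W : Finset C)
    (i : V) : totalPaid (pricedPayments u ρ W) i = ∑ c ∈ W, u i c * ρ c := by
  simp [totalPaid, pricedPayments, Finset.sum_ite_mem]

variable [Fintype V]

lemma not_FJR_of_weaklyCohesive {β : ℝ} {S : Finset V} {T W : Finset C}
    (hS : weaklyCohesive cost u β S T) (hW : ∀ i ∈ S, util u i W < β) : ¬ FJR cost u W :=
  fun hFJR => by
    obtain ⟨i, hi, hβ⟩ := hFJR β S T hS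
    exact (hW i hi).not_ge hβ

variable [Fintype C]

lemma affordable.cost_le_support_mul {pay : V → C → ℝ} {ρ : ℝ} {c : C}
    (h : affordable cost u pay ρ c) : (cost c : ℝ) ≤ (∑ i, u i c) * ρ := by
  rw [← h, Finset.sum_mul]
  exact Finset.sum_le_sum fun i _ => min_le_right _ _

lemma affordable.cost_le_sum_remaining {pay : V → C → ℝ} {ρ : ℝ} {c : C}
    (h : affordable cost u pay ρ c) :
    (cost c : ℝ) ≤ ∑ i ∈ univ.filter (fun i => u i c ≠ 0),
      (1 / Fintype.card V - totalPaid pay i) := by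
  rw [← h, ← Finset.sum_filter_add_sum_filter_not univ (fun i => u i c ≠ 0)]
  refine (add_le_add (Finset.sum_le_sum fun i _ => min_le_left _ _)
    (Finset.sum_nonpos fun i hi => ?_)).trans_eq (add_zero _)
  rw [not_not.mp (Finset.mem_filter.mp hi).2, zero_mul]
  exact min_le_right _ _

lemma ruleXTerminal_of_remaining_lt {s : Finset C × (V → C → ℝ)}
    (h : ∀ c ∉ s.1, ∑ i ∈ univ.filter (fun i => u i c ≠ 0),
      (1 / Fintype.card V - totalPaid s.2 i) < cost c) :
    RuleXTerminal cost u s :=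
  fun _ _ c hc haff => (h c hc).not_ge haff.cost_le_sum_remaining

variable [DecidableEq C]

lemma ruleXStep_pricedPayments {ρ : C → ℝ} {W : Finset C} {c : C} (hc : c ∉ W)
    (hcost : ∀ c', 0 < cost c') (hρ : 0 ≤ ρ c)
    (hprice : (∑ i, u i c) * ρ c = cost c)
    (hmin : ∀ c' ∉ W, (∑ i, u i c') * ρ c ≤ cost c')
    (hbudget : ∀ i, ∑ c' ∈ insert c W, u i c' * ρ c' ≤ 1 / Fintype.card V) :
    RuleXStep cost u (W, pricedPayments u ρ W)
      (insert c W, pricedPayments u ρ (insert c W)) := by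
  have hpay : ∀ i, min (1 / Fintype.card V - totalPaid (pricedPayments u ρ W) i)
      (u i c * ρ c) = u i c * ρ c := by
    intro i
    have := hbudget i
    rw [Finset.sum_insert hc] at this
    rw [totalPaid_pricedPayments]
    exact min_eq_right (by linarith)
  refine ⟨c, hc, ρ c, hρ, ?_, ?_, ?_⟩
  · simp only [affordable, hpay, ← Finset.sum_mul, hprice]
  · intro ρ' hρ' c' hc' haff
    have hlow := hmin c' hc'
    have hup := haff.cost_le_support_mul
    have hpos : (0 : ℝ) < cost c' := by exact_mod_cast hcost c'
    have hsupport : 0 < ∑ i, u i c' := by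
      by_contra! h
      linarith [mul_nonpos_of_nonpos_of_nonneg h hρ']
    exact le_of_mul_le_mul_left (hlow.trans hup) hsupport
  · refine Prod.ext rfl (funext₂ fun i c' => ?_)
    by_cases hc' : c' = c
    · subst hc'
      dsimp only
      rw [if_pos rfl, hpay]
      simp [pricedPayments]
    · simp [pricedPayments, hc']

end RuleX

section FJRExample

def fjrApprovers (c : Fin 13) : Finset (Fin 22) := univ.filter (c ∈ fjrApprovals ·)

lemma sum_fjrUtil (c : Fin 13) : ∑ i, fjrUtil i c = #(fjrApprovers c) := by
  simp [fjrUtil, fjrApprovers, Finset.sum_boole]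

lemma filter_fjrUtil_ne_zero (c : Fin 13) :
    univ.filter (fun i => fjrUtil i c ≠ 0) = fjrApprovers c := by
  ext i
  simp [fjrUtil, fjrApprovers]

lemma sum_fjrUtil_mul (i : Fin 22) (T : Finset (Fin 13)) (f : Fin 13 → ℝ) :
    ∑ c ∈ T, fjrUtil i c * f c = ∑ c ∈ T ∩ fjrApprovals i, f c := by
  simp [fjrUtil, Finset.sum_ite_mem]

lemma util_fjrUtil (i : Fin 22) (T : Finset (Fin 13)) :
    util fjrUtil i T = #(T ∩ fjrApprovals i) := by
  simpa [util] using sum_fjrUtil_mul i T 1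

/-- Each approver's share of a candidate bought in the run, in units of `1/330`: a voter's
budget `1/22` is 15 units and a candidate's cost `1/11` is 30 units. -/
def fjrPrice (c : Fin 13) : ℕ := if (c : ℕ) < 4 then 2 else 5

def fjrBought (k : ℕ) : Finset (Fin 13) := univ.filter (fun c => (c : ℕ) < k)

noncomputable def fjrState (k : ℕ) : Finset (Fin 13) × (Fin 22 → Fin 13 → ℝ) :=
  (fjrBought k, pricedPayments fjrUtil (fun c => fjrPrice c / 330) (fjrBought k))

lemma fjr_support_mul_price :
    ∀ c : Fin 13, (c : ℕ) < 7 → #(fjrApprovers c) * fjrPrice c = 30 := by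
  decide

lemma fjr_support_mul_price_le :
    ∀ c c' : Fin 13, (c : ℕ) < 7 → c ≤ c' → #(fjrApprovers c') * fjrPrice c ≤ 30 := by
  decide

lemma fjr_spend_le : ∀ i, ∑ c ∈ fjrBought 7 ∩ fjrApprovals i, fjrPrice c ≤ 15 := by
  decide

lemma fjr_leftover_lt : ∀ c ∉ fjrBought 7,
    ∑ i ∈ fjrApprovers c, (15 - ∑ c' ∈ fjrBought 7 ∩ fjrApprovals i, fjrPrice c') < 30 := by
  decide

lemma sum_fjrUtil_mul_fjrPrice (k : ℕ) (i : Fin 22) :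
    ∑ c ∈ fjrBought k, fjrUtil i c * (fjrPrice c / 330 : ℝ) =
      (∑ c ∈ fjrBought k ∩ fjrApprovals i, fjrPrice c : ℕ) / 330 := by
  rw [sum_fjrUtil_mul, Nat.cast_sum, Finset.sum_div]

lemma fjr_step (k : ℕ) (hk : k < 7) :
    RuleXStep fjrCost fjrUtil (fjrState k) (fjrState (k + 1)) := by
  set c : Fin 13 := ⟨k, by omega⟩
  have hins : fjrBought (k + 1) = insert c (fjrBought k) := by
    ext d
    simp only [fjrBought, Finset.mem_filter, Finset.mem_univ, true_and, Finset.mem_insert,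
      Fin.ext_iff, c]
    omega
  rw [fjrState, fjrState, hins]
  refine ruleXStep_pricedPayments (by simp [fjrBought, c]) (fun _ => by norm_num [fjrCost])
    (by positivity) ?_ (fun c' hc' => ?_) (fun i => ?_)
  · have h : ((#(fjrApprovers c) * fjrPrice c : ℕ) : ℝ) = 30 := by
      exact_mod_cast fjr_support_mul_price c hk
    push_cast at h
    rw [sum_fjrUtil, fjrCost]
    push_cast
    linarith
  · have h : ((#(fjrApprovers c') * fjrPrice c : ℕ) : ℝ) ≤ 30 := by
      exact_mod_cast fjr_support_mul_price_le c c' hk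
        (by simpa [fjrBought, c, Fin.le_def] using hc')
    push_cast at h
    rw [sum_fjrUtil, fjrCost]
    push_cast
    linarith
  · have h : ((∑ c ∈ fjrBought 7 ∩ fjrApprovals i, fjrPrice c : ℕ) : ℝ) ≤ 15 := by
      exact_mod_cast fjr_spend_le i
    calc ∑ c' ∈ insert c (fjrBought k), fjrUtil i c' * (fjrPrice c' / 330 : ℝ)
        ≤ ∑ c' ∈ fjrBought 7, fjrUtil i c' * (fjrPrice c' / 330 : ℝ) := by
          rw [← hins]
          refine Finset.sum_le_sum_of_subset_of_nonneg ?_ fun c' _ _ => ?_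
          · intro d
            simp only [fjrBought, Finset.mem_filter, Finset.mem_univ, true_and]
            omega
          · unfold fjrUtil
            positivity
      _ ≤ 1 / Fintype.card (Fin 22) := by
          rw [sum_fjrUtil_mul_fjrPrice, Fintype.card_fin]
          linarith

lemma fjr_terminal : RuleXTerminal fjrCost fjrUtil (fjrState 7) := by
  refine ruleXTerminal_of_remaining_lt fun c hc => ?_
  have hrem : ∀ i, (1 : ℝ) / 22 - totalPaid (fjrState 7).2 i =
      ((15 - ∑ c' ∈ fjrBought 7 ∩ fjrApprovals i, fjrPrice c' : ℕ) : ℝ) / 330 := by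
    intro i
    rw [fjrState, totalPaid_pricedPayments, sum_fjrUtil_mul_fjrPrice,
      Nat.cast_sub (fjr_spend_le i)]
    ring
  have h := fjr_leftover_lt c hc
  rw [← Nat.cast_lt (α := ℝ)] at h
  push_cast at h
  rw [Fintype.card_fin, Nat.cast_ofNat, filter_fjrUtil_ne_zero,
    Finset.sum_congr rfl fun i _ => hrem i, ← Finset.sum_div, fjrCost]
  push_cast
  linarith

lemma fjr_ruleXOutcome :
    RuleXOutcome fjrCost fjrUtil ({0, 1, 2, 3, 4, 5, 6} : Finset (Fin 13)) := by
  have hstart : fjrState 0 = (∅, fun _ _ => 0) := by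
    rw [fjrState, show fjrBought 0 = ∅ by decide]
    rfl
  have hrun : Relation.ReflTransGen (RuleXStep fjrCost fjrUtil) (fjrState 0) (fjrState 7) :=
    (reflTransGen_of_succ_of_le (fun a b => RuleXStep fjrCost fjrUtil (fjrState a) (fjrState b))
      (fun k hk => by simpa using fjr_step k hk.2) (by norm_num)).lift fjrState fun _ _ h => h
  have hend : fjrBought 7 = {0, 1, 2, 3, 4, 5, 6} := by decide
  rw [hstart] at hrun
  rw [← hend]
  exact ⟨_, hrun, fjr_terminal⟩

lemma fjr_weaklyCohesive : weaklyCohesive fjrCost fjrUtil 5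
    (univ.filter (fun i : Fin 22 => (i : ℕ) < 18))
    ({0, 1, 2, 3, 7, 8, 9, 10, 11} : Finset (Fin 13)) := by
  have hS : #(univ.filter (fun i : Fin 22 => (i : ℕ) < 18)) = 18 := by decide
  have hT : #({0, 1, 2, 3, 7, 8, 9, 10, 11} : Finset (Fin 13)) = 9 := by decide
  have happ : ∀ i ∈ univ.filter (fun i : Fin 22 => (i : ℕ) < 18),
      5 ≤ #({0, 1, 2, 3, 7, 8, 9, 10, 11} ∩ fjrApprovals i) := by decide
  refine ⟨⟨0, by decide⟩, ?_, fun i hi => ?_⟩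
  · simp only [costOf, fjrCost, Finset.sum_const, hT, hS, Fintype.card_fin]
    norm_num
  · rw [util_fjrUtil]
    exact_mod_cast happ i hi

lemma fjr_util_le_four : ∀ i ∈ univ.filter (fun i : Fin 22 => (i : ℕ) < 18),
    util fjrUtil i ({0, 1, 2, 3, 4, 5, 6} : Finset (Fin 13)) ≤ 4 := by
  have happ : ∀ i ∈ univ.filter (fun i : Fin 22 => (i : ℕ) < 18),
      #({0, 1, 2, 3, 4, 5, 6} ∩ fjrApprovals i) ≤ 4 := by decide
  intro i hi
  rw [util_fjrUtil]
  exact_mod_cast happ i hi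

end FJRExample

/-- Rule X fails full justified representation: some execution of
Rule X outputs W = {c₁,…,c₇}, although the group of voters 1–18 is weakly
(5, {c₁,c₂,c₃,c₄,c₈,c₉,c₁₀,c₁₁,c₁₂})-cohesive and every voter in it has at most
4 approved candidates in W. -/
theorem ruleX_fails_FJR :
    RuleXOutcome fjrCost fjrUtil ({0, 1, 2, 3, 4, 5, 6} : Finset (Fin 13)) ∧
    weaklyCohesive fjrCost fjrUtil 5
      (Finset.univ.filter (fun i : Fin 22 => (i : ℕ) < 18))
      ({0, 1, 2, 3, 7, 8, 9, 10, 11} : Finset (Fin 13)) ∧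
    (∀ i ∈ Finset.univ.filter (fun i : Fin 22 => (i : ℕ) < 18),
      util fjrUtil i ({0, 1, 2, 3, 4, 5, 6} : Finset (Fin 13)) ≤ 4) ∧
    ¬ FJR fjrCost fjrUtil ({0, 1, 2, 3, 4, 5, 6} : Finset (Fin 13)) :=
  ⟨fjr_ruleXOutcome, fjr_weaklyCohesive, fjr_util_le_four,
    not_FJR_of_weaklyCohesive fjr_weaklyCohesive fun i hi =>
      (fjr_util_le_four i hi).trans_lt (by norm_num)⟩
end

section
/- PAV fails full justified representation: in the approval-based committee election with n = 6 voters, m = 15 candidates c_1,…,c_15 each of cost 1/12 (committee size k = 12), and approval sets A(1)={c_1,c_2,c_3,c_4}, A(2)={c_1,c_2,c_3,c_5}, A(3)={c_1,c_2,c_3,c_6}, A(4)={c_7,c_8,c_9}, A(5)={c_10,c_11,c_12}, A(6)={c_13,c_14,c_15}, every feasible outcome W maximizing the PAV score gives each of voters 1, 2, 3 at most 3 approved members, although voters {1,2,3} form a weakly (4, {c_1,c_2,c_3,c_4,c_5,c_6})-cohesive group; hence every PAV-optimal outcome violates FJR. -/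
open Finset

/-- Approval sets of the 6 voters over the 15 candidates (candidate `c_j` is `j-1`). -/
def pavApprovals : Fin 6 → Finset (Fin 15) := fun i =>
  if (i : ℕ) = 0 then {0, 1, 2, 3}
  else if (i : ℕ) = 1 then {0, 1, 2, 4}
  else if (i : ℕ) = 2 then {0, 1, 2, 5}
  else if (i : ℕ) = 3 then {6, 7, 8}
  else if (i : ℕ) = 4 then {9, 10, 11}
  else {12, 13, 14}

/-- The corresponding 0/1 utility functions. -/
noncomputable def pavUtil : Fin 6 → Fin 15 → ℝ := fun i c => if c ∈ pavApprovals i then 1 else 0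

/-- All 15 candidates cost 1/12 (committee size k = 12). -/
def pavCost : Fin 15 → ℚ := fun _ => 1/12

/-! A PAV-optimal outcome cannot contain all four candidates approved by one of the voters
1, 2, 3: it would then hold that voter's private candidate, worth only `1/4` to the PAV score,
while the 12 seats leave at most 8 for the three voters 4, 5, 6, so one of them has at most two
approved members, and a further one of their candidates would be worth at least `1/3`.
Since the group {1, 2, 3} may claim six candidates and all of them approve four of those,
the resulting cap of three approved members per voter contradicts FJR. -/

lemma harm_succ (t : ℕ) : harm (t + 1) = harm t + 1 / ((t : ℝ) + 1) := by
  simp [harm, sum_range_succ]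

section Swap

variable {V C : Type*} [Fintype V] [DecidableEq V] [DecidableEq C]

theorem PAVscore_insert_erase_add (A : V → Finset C) {W : Finset C} {e c : C} {ve vc : V}
    (hne : ve ≠ vc) (he : ∀ i, e ∈ A i ↔ i = ve) (hc : ∀ i, c ∈ A i ↔ i = vc)
    (heW : e ∈ W) (hcW : c ∉ W) :
    PAVscore A (insert c (W.erase e)) + 1 / (#(A ve ∩ W) : ℝ) =
      PAVscore A W + 1 / ((#(A vc ∩ W) : ℝ) + 1) := by
  have hvoter : ∀ i, harm #(A i ∩ insert c (W.erase e)) +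
      (if i = ve then 1 / (#(A ve ∩ W) : ℝ) else 0) =
      harm #(A i ∩ W) + (if i = vc then 1 / ((#(A vc ∩ W) : ℝ) + 1) else 0) := by
    intro i
    by_cases hive : i = ve
    · subst hive
      have hcA : c ∉ A i := fun h => hne ((hc i).1 h)
      rw [inter_insert_of_notMem hcA, inter_erase, if_pos rfl, if_neg hne,
        ← card_erase_add_one (mem_inter.2 ⟨(he i).2 rfl, heW⟩), harm_succ]
      push_cast
      ring
    by_cases hivc : i = vc
    · subst hivc
      have heA : e ∉ A i := fun h => hive ((he i).1 h)
      rw [inter_insert_of_mem ((hc i).2 rfl), inter_erase,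
        erase_eq_of_notMem fun h => heA (mem_inter.1 h).1,
        card_insert_of_notMem fun h => hcW (mem_inter.1 h).2, harm_succ, if_neg hive, if_pos rfl]
      ring
    · have heA : e ∉ A i := fun h => hive ((he i).1 h)
      have hcA : c ∉ A i := fun h => hivc ((hc i).1 h)
      rw [inter_insert_of_notMem hcA, inter_erase,
        erase_eq_of_notMem fun h => heA (mem_inter.1 h).1, if_neg hive, if_neg hivc]
  simpa only [PAVscore, sum_add_distrib, sum_ite_eq', mem_univ, if_true] using
    sum_congr rfl fun i (_ : i ∈ univ) => hvoter i

end Swap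

lemma sum_card_inter_le_card {ι C : Type*} [DecidableEq C] {s : Finset ι} {A : ι → Finset C}
    (hA : (s : Set ι).PairwiseDisjoint A) (W : Finset C) :
    ∑ j ∈ s, #(A j ∩ W) ≤ #W := by
  rw [← card_biUnion (hA.mono_on fun j _ => inter_subset_left)]
  exact card_le_card (biUnion_subset.2 fun j _ => inter_subset_right)

lemma feasible_pavCost_iff (W : Finset (Fin 15)) : feasible pavCost W ↔ #W ≤ 12 := by
  simp only [feasible, costOf, pavCost, sum_const, nsmul_eq_mul]
  rw [← Nat.cast_le (α := ℝ)]
  push_cast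
  constructor <;> intro h <;> linarith

lemma util_pavUtil (i : Fin 6) (T : Finset (Fin 15)) :
    util pavUtil i T = #(pavApprovals i ∩ T) := by
  simp only [util, pavUtil]
  rw [sum_boole, filter_mem_eq_inter, inter_comm]

lemma pavApprovals_eq_of_mem {c : Fin 15} {i j : Fin 6} (hi : c ∈ pavApprovals i)
    (hj : c ∈ pavApprovals j) (h : 3 ≤ (c : ℕ) ∨ 3 ≤ (i : ℕ)) : i = j := by
  revert c i j
  decide

lemma mem_pavApprovals_iff {c : Fin 15} {i : Fin 6} (hc : c ∈ pavApprovals i)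
    (h : 3 ≤ (c : ℕ) ∨ 3 ≤ (i : ℕ)) (j : Fin 6) : c ∈ pavApprovals j ↔ j = i :=
  ⟨fun hj => (pavApprovals_eq_of_mem hc hj h).symm, fun hj => hj ▸ hc⟩

lemma card_pavApprovals_of_mem_first_three {i : Fin 6} (hi : i ∈ ({0, 1, 2} : Finset (Fin 6))) :
    #(pavApprovals i) = 4 := by
  fin_cases hi <;> rfl

lemma exists_card_inter_pavApprovals_lt_three {W : Finset (Fin 15)} (hW : #W ≤ 12) {ve : Fin 6}
    (hve : ve ∈ ({0, 1, 2} : Finset (Fin 6))) (hsub : pavApprovals ve ⊆ W) :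
    ∃ vc ∈ ({3, 4, 5} : Finset (Fin 6)), #(pavApprovals vc ∩ W) < 3 := by
  have hve3 : (ve : ℕ) < 3 := by fin_cases hve <;> decide
  have hdisj : ((insert ve {3, 4, 5} : Finset (Fin 6)) : Set (Fin 6)).PairwiseDisjoint
      pavApprovals := by
    intro i hi j hj hij
    have h3 : 3 ≤ (i : ℕ) ∨ 3 ≤ (j : ℕ) := by
      simp only [coe_insert, coe_singleton, Set.mem_insert_iff, Set.mem_singleton_iff,
        Fin.ext_iff] at hi hj
      rw [Ne, Fin.ext_iff] at hij
      omega
    refine disjoint_left.2 fun c hci hcj => hij ?_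
    rcases h3 with h3 | h3
    · exact pavApprovals_eq_of_mem hci hcj (.inr h3)
    · exact (pavApprovals_eq_of_mem hcj hci (.inr h3)).symm
  have hsum := sum_card_inter_le_card hdisj W
  rw [sum_insert (by fin_cases hve <;> decide), inter_eq_left.2 hsub,
    card_pavApprovals_of_mem_first_three hve] at hsum
  apply exists_lt_of_sum_lt
  rw [sum_const, smul_eq_mul, show #({3, 4, 5} : Finset (Fin 6)) = 3 from rfl]
  omega

lemma exists_PAVscore_lt {W : Finset (Fin 15)} (hW : #W ≤ 12) {ve : Fin 6}
    (hve : ve ∈ ({0, 1, 2} : Finset (Fin 6))) (hsub : pavApprovals ve ⊆ W) :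
    ∃ W' : Finset (Fin 15), #W' ≤ 12 ∧ PAVscore pavApprovals W < PAVscore pavApprovals W' := by
  obtain ⟨vc, hvc, hlt⟩ := exists_card_inter_pavApprovals_lt_three hW hve hsub
  have hvc3 : 3 ≤ (vc : ℕ) := by fin_cases hvc <;> decide
  have hne : ve ≠ vc := by fin_cases hve <;> fin_cases hvc <;> decide
  obtain ⟨e, heA, he3⟩ : ∃ e ∈ pavApprovals ve, 3 ≤ (e : ℕ) := by fin_cases hve <;> decide
  obtain ⟨c, hcA, hcW⟩ : ∃ c ∈ pavApprovals vc, c ∉ pavApprovals vc ∩ W :=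
    exists_mem_notMem_of_card_lt_card (by fin_cases hvc <;> exact hlt)
  have hswap := PAVscore_insert_erase_add pavApprovals hne (mem_pavApprovals_iff heA (.inl he3))
    (mem_pavApprovals_iff hcA (.inr hvc3)) (hsub heA) fun h => hcW (mem_inter.2 ⟨hcA, h⟩)
  refine ⟨insert c (W.erase e), (card_insert_le _ _).trans ?_, ?_⟩
  · rw [card_erase_of_mem (hsub heA)]
    omega
  · rw [inter_eq_left.2 hsub, card_pavApprovals_of_mem_first_three hve] at hswap
    have hgain : (1 : ℝ) / 3 ≤ 1 / ((#(pavApprovals vc ∩ W) : ℝ) + 1) :=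
      one_div_le_one_div_of_le (by positivity) (by exact_mod_cast hlt)
    push_cast at hswap
    linarith

lemma card_inter_pavApprovals_le_three_of_PAV_optimal {W : Finset (Fin 15)}
    (hW : feasible pavCost W)
    (hopt : ∀ W', feasible pavCost W' → PAVscore pavApprovals W' ≤ PAVscore pavApprovals W) :
    ∀ i ∈ ({0, 1, 2} : Finset (Fin 6)), #(pavApprovals i ∩ W) ≤ 3 := by
  intro i hi
  by_contra! h
  have hsub : pavApprovals i ⊆ W := inter_eq_left.1 <| eq_of_subset_of_card_le inter_subset_left
    (by rw [card_pavApprovals_of_mem_first_three hi]; omega)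
  obtain ⟨W', hW', hlt⟩ := exists_PAVscore_lt ((feasible_pavCost_iff W).1 hW) hi hsub
  exact (hopt W' ((feasible_pavCost_iff W').2 hW')).not_gt hlt

lemma weaklyCohesive_first_three :
    weaklyCohesive pavCost pavUtil 4 ({0, 1, 2} : Finset (Fin 6))
      ({0, 1, 2, 3, 4, 5} : Finset (Fin 15)) := by
  refine ⟨⟨0, by decide⟩, ?_, fun i hi => ?_⟩
  · simp only [costOf, pavCost, sum_const]
    rw [show #({0, 1, 2, 3, 4, 5} : Finset (Fin 15)) = 6 from rfl,
      show #({0, 1, 2} : Finset (Fin 6)) = 3 from rfl]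
    norm_num
  · rw [util_pavUtil,
      show #(pavApprovals i ∩ {0, 1, 2, 3, 4, 5}) = 4 by fin_cases hi <;> rfl]
    norm_num

/-- PAV fails full justified representation: every feasible outcome
maximizing the PAV score gives each of the first three voters at most 3 approved
candidates, although those voters form a weakly (4, {c₁,…,c₆})-cohesive group;
hence every PAV-optimal outcome violates FJR. -/
theorem PAV_fails_FJR :
    ∀ W : Finset (Fin 15), feasible pavCost W →
      (∀ W' : Finset (Fin 15), feasible pavCost W' → PAVscore pavApprovals W' ≤ PAVscore pavApprovals W) →
      (∀ i ∈ ({0, 1, 2} : Finset (Fin 6)), ((pavApprovals i ∩ W).card : ℕ) ≤ 3) ∧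
      weaklyCohesive pavCost pavUtil 4 ({0, 1, 2} : Finset (Fin 6))
        ({0, 1, 2, 3, 4, 5} : Finset (Fin 15)) ∧
      ¬ FJR pavCost pavUtil W := by
  intro W hW hopt
  have hcap := card_inter_pavApprovals_le_three_of_PAV_optimal hW hopt
  refine ⟨hcap, weaklyCohesive_first_three, fun hFJR => ?_⟩
  obtain ⟨i, hi, hfour⟩ := hFJR 4 _ _ weaklyCohesive_first_three
  rw [util_pavUtil] at hfour
  have hthree : (#(pavApprovals i ∩ W) : ℝ) ≤ 3 := by exact_mod_cast hcap i hi
  linarith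
end
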